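/- There exists an absolute constant C > 0 such that, for the Frank–Wolfe algorithm run for any number of iterations T ≥ 2, the best iterate satisfies max_{0 ≤ j ≤ T} F(x(t_j)) ≥ (1/4) F(x*) − C · nL/(ln T)². -/

import Mathlib

/-!
Along a direction `d ≥ 0` (or `d ≤ 0`) a smooth DR-submodular function is concave, so
`F (x ⊔ x*) ≤ F x + ⟪∇F x, x ⊔ x* - x⟫` and `F (x ⊓ x*) ≤ F x + ⟪∇F x, x ⊓ x* - x⟫`. Together with
`F (x ⊔ x*) ≥ (1 - ‖x‖∞) F x*` and `F (x ⊓ x*) ≥ 0`, this gives for the Frank–Wolfe vertex `v`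
`⟪∇F x, v - x⟫ ≥ (1 - ‖x‖∞) F x* - 2 F x`. For steps `x_{j+1} = r_j x_j + (1 - r_j) v_j` with
`r_j ≥ 1/2` and `u_j = ∏_{k<j} r_k`, induction then gives `‖x_j‖∞ ≤ 1 - u_j` and, by smoothness,
`F x_j ≥ (u_j - u_j²) F x* - (nL/2) ∑_{k<j} (1 - r_k)²`.
For the schedule of the theorem `r_j = a_j / a_{j+1}` with `a_j = 1 + H_j / H_T`, so `u_T = 1/2` and
`1 - r_j ≤ 1 / ((j + 1) H_T)`. The error is therefore at most `nL ∑ 1/k² / (2 H_T²) ≤ nL / (ln T)²`,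
already at the last iterate.
-/

/-- The harmonic number `H j = ∑_{k=1}^j 1/k` (with `H 0 = 0`). -/
noncomputable def harmonicNum (j : ℕ) : ℝ := ∑ k ∈ Finset.range j, (1 : ℝ) / (k + 1)

/-- `H_{2,j} = ∑_{k=1}^j 1/k²`. -/
noncomputable def harmonicNum2 (j : ℕ) : ℝ := ∑ k ∈ Finset.range j, (1 : ℝ) / ((k : ℝ) + 1) ^ 2

/-- The time values `t_j = 1/(1 - ln(1 + H_j/H_T)) - 1` of the Frank–Wolfe algorithm. -/
noncomputable def fwTime (T j : ℕ) : ℝ :=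
  1 / (1 - Real.log (1 + harmonicNum j / harmonicNum T)) - 1

/-- The Frank–Wolfe step ratio `e^{-1/(1+t_j) + 1/(1+t_{j+1})}`. -/
noncomputable def fwRatio (T j : ℕ) : ℝ :=
  Real.exp (-(1 / (1 + fwTime T j)) + 1 / (1 + fwTime T (j + 1)))

/-- `√a_{t_j} = e^{t_j/(1+t_j)}`. -/
noncomputable def fwSqa (T j : ℕ) : ℝ := Real.exp (fwTime T j / (1 + fwTime T j))

/-- `F : [0,1]^n → ℝ` is DR-submodular: for all `x ≤ y` in `[0,1]^n`, coordinates `i` and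
`a > 0` with `x + a·e_i, y + a·e_i ∈ [0,1]^n`, one has
`F(x + a·e_i) - F(x) ≥ F(y + a·e_i) - F(y)`. -/
def DRSubmodular {n : ℕ} (F : (Fin n → ℝ) → ℝ) : Prop :=
  ∀ x y : Fin n → ℝ, x ∈ Set.Icc (0 : Fin n → ℝ) 1 → y ∈ Set.Icc (0 : Fin n → ℝ) 1 →
    x ≤ y → ∀ i : Fin n, ∀ a : ℝ, 0 < a →
      x + a • (Pi.single i 1 : Fin n → ℝ) ∈ Set.Icc (0 : Fin n → ℝ) 1 →
      y + a • (Pi.single i 1 : Fin n → ℝ) ∈ Set.Icc (0 : Fin n → ℝ) 1 →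
      F (y + a • (Pi.single i 1 : Fin n → ℝ)) - F y ≤
        F (x + a • (Pi.single i 1 : Fin n → ℝ)) - F x

/-- The continuous linear map `y ↦ ⟨g, y⟩ = ∑ i, g i * y i` on `ℝⁿ`. -/
noncomputable def gradCLM {n : ℕ} (g : Fin n → ℝ) : (Fin n → ℝ) →L[ℝ] ℝ :=
  ∑ i, g i • (ContinuousLinearMap.proj i : (Fin n → ℝ) →L[ℝ] ℝ)

/-- `gradF` is the gradient of `F` on the box `[0,1]^n`: at each point of the box, `F` is
differentiable within the box with derivative `y ↦ ⟨gradF z, y⟩`. -/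
def HasGradientOnBox {n : ℕ} (F : (Fin n → ℝ) → ℝ) (gradF : (Fin n → ℝ) → Fin n → ℝ) : Prop :=
  ∀ z ∈ Set.Icc (0 : Fin n → ℝ) 1, HasFDerivWithinAt F (gradCLM (gradF z)) (Set.Icc 0 1) z

open Set Filter Topology

section DRSubmodular

def LSmoothOnBox {n : ℕ} (F : (Fin n → ℝ) → ℝ) (gradF : (Fin n → ℝ) → Fin n → ℝ) (L : ℝ) :
    Prop :=
  ∀ z ∈ Icc (0 : Fin n → ℝ) 1, ∀ w ∈ Icc (0 : Fin n → ℝ) 1,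
    |F w - F z - gradF z ⬝ᵥ (w - z)| ≤ L / 2 * ∑ i, (w i - z i) ^ 2

variable {n : ℕ} {F : (Fin n → ℝ) → ℝ} {gradF : (Fin n → ℝ) → Fin n → ℝ} {L : ℝ}

theorem gradCLM_apply (g d : Fin n → ℝ) : gradCLM g d = g ⬝ᵥ d := by
  simp [gradCLM, dotProduct]

theorem add_smul_single_mem_box {z : Fin n → ℝ} (hz : z ∈ Icc 0 1) {i : Fin n} {a : ℝ}
    (ha : 0 ≤ a) (hzi : z i + a ≤ 1) : z + a • Pi.single i 1 ∈ Icc (0 : Fin n → ℝ) 1 := by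
  simp only [mem_Icc, Pi.le_def, Pi.zero_apply, Pi.one_apply] at hz ⊢
  constructor <;> intro k <;> rcases eq_or_ne k i with rfl | hk <;> simp [*]
  linarith [hz.1 k]

theorem HasGradientOnBox.exists_sub_eq_dotProduct (hgrad : HasGradientOnBox F gradF)
    {x d : Fin n → ℝ} (hx : x ∈ Icc 0 1) (hxd : x + d ∈ Icc 0 1) :
    ∃ c ∈ Ioo (0 : ℝ) 1, F (x + d) - F x = gradF (x + c • d) ⬝ᵥ d := by
  have hseg : MapsTo (fun c : ℝ => x + c • d) (Icc 0 1) (Icc 0 1) :=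
    fun c hc => (convex_Icc 0 1).add_smul_mem hx hxd hc
  have hderiv : ∀ c ∈ Icc (0 : ℝ) 1, HasDerivWithinAt (fun c : ℝ => F (x + c • d))
      (gradF (x + c • d) ⬝ᵥ d) (Icc 0 1) c := by
    intro c hc
    have hline : HasDerivWithinAt (fun c : ℝ => x + c • d) d (Icc 0 1) c := by
      simpa using (((hasDerivAt_id c).smul_const d).const_add x).hasDerivWithinAt
    have h := (hgrad _ (hseg hc)).comp_hasDerivWithinAt c hline hseg
    rwa [gradCLM_apply] at h
  obtain ⟨c, hc, h⟩ := exists_hasDerivAt_eq_slope (fun c : ℝ => F (x + c • d))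
    (fun c => gradF (x + c • d) ⬝ᵥ d) zero_lt_one
    (fun c hc => (hderiv c hc).continuousWithinAt)
    (fun c hc => (hderiv c (Ioo_subset_Icc_self hc)).hasDerivAt (Icc_mem_nhds hc.1 hc.2))
  exact ⟨c, hc, by simpa using h.symm⟩

theorem DRSubmodular.gradF_le_of_le (hDR : DRSubmodular F) (hsm : LSmoothOnBox F gradF L)
    {x y : Fin n → ℝ} (hx : x ∈ Icc 0 1) (hy : y ∈ Icc 0 1) (hxy : x ≤ y) {i : Fin n}
    (hyi : y i < 1) : gradF y i ≤ gradF x i := by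
  have hquad : ∀ z ∈ Icc (0 : Fin n → ℝ) 1, ∀ a : ℝ, z + a • Pi.single i 1 ∈ Icc 0 1 →
      |F (z + a • Pi.single i 1) - F z - a * gradF z i| ≤ L / 2 * a ^ 2 := by
    intro z hz a hza
    have := hsm z hz _ hza
    simp only [add_sub_cancel_left, dotProduct_smul, dotProduct_single, smul_eq_mul, mul_one,
      Pi.add_apply, Pi.smul_apply, Pi.single_apply] at this
    simpa [mul_comm] using this
  have hsmall : ∀ a ∈ Ioo 0 (1 - y i), gradF y i ≤ gradF x i + L * a := by
    intro a ⟨ha0, ha1⟩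
    have hxa := add_smul_single_mem_box hx ha0.le (by linarith [hxy i])
    have hya := add_smul_single_mem_box hy ha0.le (by linarith)
    have hdr := hDR x y hx hy hxy i a ha0 hxa hya
    have hqx := abs_le.1 (hquad x hx a hxa)
    have hqy := abs_le.1 (hquad y hy a hya)
    refine le_of_mul_le_mul_left ?_ ha0
    nlinarith
  have hlim : Tendsto (fun a => gradF x i + L * a) (𝓝[>] 0) (𝓝 (gradF x i)) := by
    have : Continuous (fun a : ℝ => gradF x i + L * a) := by fun_prop
    simpa using (this.tendsto 0).mono_left nhdsWithin_le_nhds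
  exact ge_of_tendsto hlim (eventually_of_mem (Ioo_mem_nhdsGT (by linarith)) hsmall)

theorem DRSubmodular.le_add_dotProduct_of_nonneg (hDR : DRSubmodular F)
    (hsm : LSmoothOnBox F gradF L) (hgrad : HasGradientOnBox F gradF) {x d : Fin n → ℝ}
    (hx : x ∈ Icc 0 1) (hxd : x + d ∈ Icc 0 1) (hd : 0 ≤ d) :
    F (x + d) ≤ F x + gradF x ⬝ᵥ d := by
  obtain ⟨c, hc, hmvt⟩ := hgrad.exists_sub_eq_dotProduct hx hxd
  have hxc : x + c • d ∈ Icc 0 1 :=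
    (convex_Icc 0 1).add_smul_mem hx hxd (Ioo_subset_Icc_self hc)
  suffices gradF (x + c • d) ⬝ᵥ d ≤ gradF x ⬝ᵥ d by linarith
  refine Finset.sum_le_sum fun i _ => ?_
  rcases (hd i).eq_or_lt with hdi | hdi
  · simp [← hdi]
  · have hxdi : x i + d i ≤ 1 := hxd.2 i
    have hlt : x i + c * d i < 1 := by nlinarith [mul_pos (sub_pos.2 hc.2) hdi]
    exact mul_le_mul_of_nonneg_right (hDR.gradF_le_of_le hsm hx hxc
      (le_add_of_nonneg_right (smul_nonneg hc.1.le hd)) hlt) hdi.le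

theorem DRSubmodular.le_add_dotProduct_of_nonpos (hDR : DRSubmodular F)
    (hsm : LSmoothOnBox F gradF L) (hgrad : HasGradientOnBox F gradF) {x d : Fin n → ℝ}
    (hx : x ∈ Icc 0 1) (hxd : x + d ∈ Icc 0 1) (hd : d ≤ 0) (hx1 : ∀ i, d i < 0 → x i < 1) :
    F (x + d) ≤ F x + gradF x ⬝ᵥ d := by
  obtain ⟨c, hc, hmvt⟩ := hgrad.exists_sub_eq_dotProduct hx hxd
  have hxc : x + c • d ∈ Icc 0 1 :=
    (convex_Icc 0 1).add_smul_mem hx hxd (Ioo_subset_Icc_self hc)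
  suffices gradF (x + c • d) ⬝ᵥ d ≤ gradF x ⬝ᵥ d by linarith
  refine Finset.sum_le_sum fun i _ => ?_
  rcases (hd i).lt_or_eq with hdi | hdi
  · exact mul_le_mul_of_nonpos_right (hDR.gradF_le_of_le hsm hxc hx
      (add_le_of_nonpos_right (smul_nonpos_of_nonneg_of_nonpos hc.1.le hd)) (hx1 i hdi)) hdi.le
  · simp [hdi]

/-- `F` is concave on the ray from `p` through `z ⊔ p`; the ray stays in the box up to
`p + θ⁻¹ • (z ⊔ p - p)`, where `F ≥ 0`. -/
theorem DRSubmodular.mul_le_sup (hDR : DRSubmodular F) (hsm : LSmoothOnBox F gradF L)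
    (hgrad : HasGradientOnBox F gradF) (hF : ∀ z ∈ Icc (0 : Fin n → ℝ) 1, 0 ≤ F z)
    {z p : Fin n → ℝ} (hz : z ∈ Icc 0 1) (hp : p ∈ Icc 0 1) {θ : ℝ} (hθ0 : 0 ≤ θ)
    (hθ1 : θ < 1) (hzθ : ∀ i, z i ≤ θ) : (1 - θ) * F p ≤ F (z ⊔ p) := by
  rcases hθ0.eq_or_lt with rfl | hθ
  · rw [sup_eq_right.2 fun i => (hzθ i).trans (hp.1 i)]
    simp
  set q := z ⊔ p
  set d := q - p
  have hq : q ∈ Icc 0 1 := ⟨le_sup_of_le_left hz.1, sup_le hz.2 hp.2⟩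
  have hd : 0 ≤ d := sub_nonneg.2 le_sup_right
  have hdθ : ∀ i, d i ≤ θ * (1 - p i) := by
    intro i
    have hpi : 0 ≤ p i ∧ p i ≤ 1 := ⟨hp.1 i, hp.2 i⟩
    have hdi : d i = max (z i - p i) 0 := by
      rw [← sub_self (p i), max_sub_sub_right]
      rfl
    rw [hdi]
    exact max_le (by nlinarith [hzθ i]) (by nlinarith)
  have hw : q + (θ⁻¹ - 1) • d ∈ Icc 0 1 := by
    have hcoef : 0 ≤ θ⁻¹ - 1 := sub_nonneg.2 (one_le_inv₀ hθ |>.2 hθ1.le)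
    refine ⟨hq.1.trans (le_add_of_nonneg_right (smul_nonneg hcoef hd)), fun i => ?_⟩
    have : θ⁻¹ * (q i - p i) ≤ 1 - p i := (inv_mul_le_iff₀ hθ).2 (hdθ i)
    show q i + (θ⁻¹ - 1) * (q i - p i) ≤ 1
    linarith
  have hlower : F p ≤ F q - gradF q ⬝ᵥ d := by
    have := hDR.le_add_dotProduct_of_nonpos hsm hgrad hq (d := -d) (by simpa [d] using hp)
      (neg_nonpos.2 hd) fun i hi => by
        have : p i < z i := by simpa [d, q] using hi
        simpa [q, this.le] using (hzθ i).trans_lt hθ1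
    simpa [d, sub_eq_add_neg] using this
  have hupper := hDR.le_add_dotProduct_of_nonneg hsm hgrad hq hw (smul_nonneg
    (sub_nonneg.2 (one_le_inv₀ hθ |>.2 hθ1.le)) hd)
  rw [dotProduct_smul, smul_eq_mul] at hupper
  have hw0 := hF _ hw
  have hθA : θ * ((θ⁻¹ - 1) * gradF q ⬝ᵥ d) = (1 - θ) * gradF q ⬝ᵥ d := by
    field_simp
  nlinarith [mul_le_mul_of_nonneg_left hlower (sub_nonneg.2 hθ1.le),
    mul_le_mul_of_nonneg_left hupper hθ.le]

theorem DRSubmodular.mul_sub_two_mul_le_dotProduct (hDR : DRSubmodular F)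
    (hsm : LSmoothOnBox F gradF L) (hgrad : HasGradientOnBox F gradF)
    (hF : ∀ z ∈ Icc (0 : Fin n → ℝ) 1, 0 ≤ F z) {x p : Fin n → ℝ} (hx : x ∈ Icc 0 1)
    (hp : p ∈ Icc 0 1) {θ : ℝ} (hθ0 : 0 ≤ θ) (hθ1 : θ < 1) (hxθ : ∀ i, x i ≤ θ) :
    (1 - θ) * F p - 2 * F x ≤ gradF x ⬝ᵥ (p - x) := by
  have hsup : x + (x ⊔ p - x) ∈ Icc 0 1 := by
    rw [add_sub_cancel]
    exact ⟨le_sup_of_le_left hx.1, sup_le hx.2 hp.2⟩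
  have hinf : x + (x ⊓ p - x) ∈ Icc 0 1 := by
    rw [add_sub_cancel]
    exact ⟨le_inf hx.1 hp.1, inf_le_of_left_le hx.2⟩
  have hup := hDR.le_add_dotProduct_of_nonneg hsm hgrad hx hsup (sub_nonneg.2 le_sup_left)
  have hdown := hDR.le_add_dotProduct_of_nonpos hsm hgrad hx hinf (sub_nonpos.2 inf_le_left)
    fun i _ => (hxθ i).trans_lt hθ1
  have hjoin := hDR.mul_le_sup hsm hgrad hF hx hp hθ0 hθ1 hxθ
  have hmeet := hF _ hinf
  have hsplit : (x ⊔ p - x) + (x ⊓ p - x) = p - x := by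
    rw [sub_add_sub_comm, add_comm (x ⊔ p), inf_add_sup]
    abel
  rw [add_sub_cancel] at hup hdown hmeet
  rw [← hsplit, dotProduct_add]
  linarith

theorem DRSubmodular.frankWolfe_step (hL : 0 ≤ L) (hDR : DRSubmodular F)
    (hsm : LSmoothOnBox F gradF L) (hgrad : HasGradientOnBox F gradF)
    (hF : ∀ z ∈ Icc (0 : Fin n → ℝ) 1, 0 ≤ F z) {x v p : Fin n → ℝ} (hx : x ∈ Icc 0 1)
    (hv : v ∈ Icc 0 1) (hp : p ∈ Icc 0 1) (hlmo : gradF x ⬝ᵥ p ≤ gradF x ⬝ᵥ v) {θ : ℝ}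
    (hθ0 : 0 ≤ θ) (hθ1 : θ < 1) (hxθ : ∀ i, x i ≤ θ) {r : ℝ} (hr0 : 0 ≤ r) (hr1 : r ≤ 1) :
    F x + (1 - r) * ((1 - θ) * F p - 2 * F x) - L / 2 * n * (1 - r) ^ 2 ≤
      F (r • x + (1 - r) • v) := by
  set x' := r • x + (1 - r) • v
  have hx' : x' ∈ Icc 0 1 := convex_Icc 0 1 hx hv hr0 (sub_nonneg.2 hr1) (by ring)
  have hdiff : x' - x = (1 - r) • (v - x) := by module
  have hsq : ∑ i, (x' i - x i) ^ 2 ≤ n * (1 - r) ^ 2 := by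
    calc ∑ i, (x' i - x i) ^ 2 ≤ ∑ _i : Fin n, (1 - r) ^ 2 := by
          refine Finset.sum_le_sum fun i _ => ?_
          have hvi : 0 ≤ v i ∧ v i ≤ 1 := ⟨hv.1 i, hv.2 i⟩
          have hxi : 0 ≤ x i ∧ x i ≤ 1 := ⟨hx.1 i, hx.2 i⟩
          have hvx : (v i - x i) ^ 2 ≤ 1 := by nlinarith
          have : x' i - x i = (1 - r) * (v i - x i) := congrFun hdiff i
          rw [this, mul_pow]
          exact mul_le_of_le_one_right (sq_nonneg _) hvx
      _ = n * (1 - r) ^ 2 := by simp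
  have hsmooth := (abs_le.1 (hsm x hx x' hx')).1
  rw [hdiff, dotProduct_smul, smul_eq_mul] at hsmooth
  have hgap := hDR.mul_sub_two_mul_le_dotProduct hsm hgrad hF hx hp hθ0 hθ1 hxθ
  rw [dotProduct_sub] at hgap hsmooth
  nlinarith [mul_le_mul_of_nonneg_left hsq (by positivity : 0 ≤ L / 2),
    mul_le_mul_of_nonneg_left (hgap.trans (sub_le_sub_right hlmo _)) (sub_nonneg.2 hr1)]

theorem DRSubmodular.frankWolfe_invariant (hL : 0 ≤ L) (hDR : DRSubmodular F)
    (hsm : LSmoothOnBox F gradF L) (hgrad : HasGradientOnBox F gradF)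
    (hF : ∀ z ∈ Icc (0 : Fin n → ℝ) 1, 0 ≤ F z) (hF0 : F 0 = 0) {p : Fin n → ℝ}
    (hp : p ∈ Icc 0 1) {N : ℕ} {r : ℕ → ℝ} (hr : ∀ j < N, 1 / 2 ≤ r j ∧ r j ≤ 1)
    {x v : ℕ → Fin n → ℝ} (hx0 : x 0 = 0) (hv : ∀ j < N, v j ∈ Icc 0 1)
    (hlmo : ∀ j < N, gradF (x j) ⬝ᵥ p ≤ gradF (x j) ⬝ᵥ v j)
    (hrec : ∀ j < N, x (j + 1) = r j • x j + (1 - r j) • v j) :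
    ∀ j ≤ N, x j ∈ Icc 0 1 ∧ (∀ i, x j i ≤ 1 - ∏ k ∈ Finset.range j, r k) ∧
      ((∏ k ∈ Finset.range j, r k) - (∏ k ∈ Finset.range j, r k) ^ 2) * F p -
        L / 2 * n * ∑ k ∈ Finset.range j, (1 - r k) ^ 2 ≤ F (x j) := by
  intro j
  induction j with
  | zero =>
    intro _
    simp [hx0, hF0]
  | succ j ih =>
    intro hj
    obtain ⟨hxj, hxu, hval⟩ := ih (by omega)
    have hj : j < N := hj
    obtain ⟨hr0, hr1⟩ := hr j hj
    rw [Finset.prod_range_succ, Finset.sum_range_succ, hrec j hj]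
    set u := ∏ k ∈ Finset.range j, r k
    set E := ∑ k ∈ Finset.range j, (1 - r k) ^ 2
    have hrk : ∀ k ∈ Finset.range j, 1 / 2 ≤ r k ∧ r k ≤ 1 :=
      fun k hk => hr k ((Finset.mem_range.1 hk).trans hj)
    have hu0 : 0 < u := Finset.prod_pos fun k hk => by linarith [(hrk k hk).1]
    have hu1 : u ≤ 1 :=
      Finset.prod_le_one (fun k hk => by linarith [(hrk k hk).1]) fun k hk => (hrk k hk).2
    have hE : 0 ≤ E := Finset.sum_nonneg fun k _ => sq_nonneg _
    have hFp := hF p hp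
    have hstep := hDR.frankWolfe_step hL hsm hgrad hF hxj (hv j hj) hp (hlmo j hj)
      (sub_nonneg.2 hu1) (sub_lt_self 1 hu0) hxu (by linarith) hr1
    rw [sub_sub_cancel] at hstep
    refine ⟨convex_Icc 0 1 hxj (hv j hj) (by linarith) (sub_nonneg.2 hr1) (by ring),
      fun i => ?_, ?_⟩
    · have hvi : v j i ≤ 1 := (hv j hj).2 i
      simp only [Pi.add_apply, Pi.smul_apply, smul_eq_mul]
      nlinarith [hxu i]
    · -- the induction hypothesis enters with weight `2 r - 1 ≥ 0`; the slack is `(u (1 - r))² F p`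
      nlinarith [mul_le_mul_of_nonneg_left hval (by linarith : 0 ≤ 2 * r j - 1),
        mul_nonneg hFp (sq_nonneg (u * (1 - r j))),
        mul_nonneg (sub_nonneg.2 hr1) (mul_nonneg (by positivity : 0 ≤ L / 2 * n) hE)]

end DRSubmodular

section Schedule

theorem harmonicNum_succ (k : ℕ) : harmonicNum (k + 1) = harmonicNum k + 1 / (k + 1) :=
  Finset.sum_range_succ _ _

theorem harmonicNum_nonneg (k : ℕ) : 0 ≤ harmonicNum k :=
  Finset.sum_nonneg fun _ _ => by positivity

theorem harmonicNum_mono : Monotone harmonicNum :=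
  monotone_nat_of_le_succ fun k => by
    rw [harmonicNum_succ]
    linarith [show (0 : ℝ) ≤ 1 / (k + 1) by positivity]

theorem harmonicNum_eq_harmonic (k : ℕ) : harmonicNum k = harmonic k := by
  simp [harmonicNum, harmonic, one_div]

theorem log_le_harmonicNum (T : ℕ) : Real.log T ≤ harmonicNum T := by
  rw [harmonicNum_eq_harmonic]
  refine le_trans ?_ (log_add_one_le_harmonic T)
  rcases T.eq_zero_or_pos with rfl | hT
  · simp
  · exact Real.log_le_log (by exact_mod_cast hT) (by push_cast; linarith)

theorem harmonicNum2_le_two (m : ℕ) : harmonicNum2 m ≤ 2 := by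
  have h := sum_Ioo_inv_sq_le (α := ℝ) 0 (m + 1)
  have hreindex :
      Finset.Ioo 0 (m + 1) = (Finset.range m).map ⟨(· + 1), add_left_injective 1⟩ := by
    ext i
    simp only [Finset.mem_Ioo, Finset.mem_map, Finset.mem_range, Function.Embedding.coeFn_mk]
    exact ⟨fun hi => ⟨i - 1, by omega, by omega⟩, by rintro ⟨k, hk, rfl⟩; omega⟩
  rw [hreindex, Finset.sum_map] at h
  simpa [harmonicNum2] using h

noncomputable def fwLevel (T j : ℕ) : ℝ := 1 + harmonicNum j / harmonicNum T

variable {T j : ℕ}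

theorem fwLevel_zero : fwLevel T 0 = 1 := by simp [fwLevel, harmonicNum]

theorem fwLevel_self (hT : T ≠ 0) : fwLevel T T = 2 := by
  rw [fwLevel, div_self (by rw [harmonicNum_eq_harmonic]; exact_mod_cast (harmonic_pos hT).ne')]
  norm_num

theorem one_le_fwLevel : 1 ≤ fwLevel T j :=
  le_add_of_nonneg_right (div_nonneg (harmonicNum_nonneg j) (harmonicNum_nonneg T))

theorem fwLevel_mono : Monotone (fwLevel T) := fun _ _ h => by
  unfold fwLevel
  gcongr
  exacts [harmonicNum_nonneg T, harmonicNum_mono h]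

theorem fwLevel_le_two (hj : j ≤ T) : fwLevel T j ≤ 2 := by
  have := div_le_one_of_le₀ (harmonicNum_mono hj) (harmonicNum_nonneg T)
  rw [fwLevel]
  linarith

theorem fwLevel_succ_sub :
    fwLevel T (j + 1) - fwLevel T j = 1 / ((j + 1) * harmonicNum T) := by
  rw [fwLevel, fwLevel, harmonicNum_succ, add_div, div_div]
  ring

theorem one_div_one_add_fwTime : 1 / (1 + fwTime T j) = 1 - Real.log (fwLevel T j) := by
  rw [fwTime, ← fwLevel, add_sub_cancel, one_div_one_div]

theorem fwLevel_pos : 0 < fwLevel T j := zero_lt_one.trans_le one_le_fwLevel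

theorem fwRatio_eq_exp :
    fwRatio T j = Real.exp (Real.log (fwLevel T j) - Real.log (fwLevel T (j + 1))) := by
  rw [fwRatio, one_div_one_add_fwTime, one_div_one_add_fwTime]
  congr 1
  ring

theorem fwRatio_eq_div : fwRatio T j = fwLevel T j / fwLevel T (j + 1) := by
  rw [fwRatio_eq_exp, Real.exp_sub, Real.exp_log fwLevel_pos, Real.exp_log fwLevel_pos]

theorem half_le_fwRatio (hj : j < T) : 1 / 2 ≤ fwRatio T j := by
  rw [fwRatio_eq_div, le_div_iff₀ fwLevel_pos]
  linarith [one_le_fwLevel (T := T) (j := j), fwLevel_le_two (T := T) (j := j + 1) hj]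

theorem fwRatio_le_one : fwRatio T j ≤ 1 := by
  rw [fwRatio_eq_div]
  exact div_le_one_of_le₀ (fwLevel_mono j.le_succ) fwLevel_pos.le

theorem one_sub_fwRatio_le : 1 - fwRatio T j ≤ 1 / ((j + 1) * harmonicNum T) := by
  have hlev := one_le_fwLevel (T := T) (j := j + 1)
  rw [fwRatio_eq_div, one_sub_div (by linarith), ← fwLevel_succ_sub]
  exact div_le_self (sub_nonneg.2 (fwLevel_mono j.le_succ)) hlev

theorem prod_range_fwRatio (hT : T ≠ 0) : ∏ k ∈ Finset.range T, fwRatio T k = 1 / 2 := by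
  simp_rw [fwRatio_eq_exp]
  rw [← Real.exp_sum,
    Finset.sum_range_sub' (fun k => Real.log (fwLevel T k)), fwLevel_zero, fwLevel_self hT,
    Real.log_one, zero_sub, Real.exp_neg, Real.exp_log two_pos, one_div]

theorem sum_range_sq_one_sub_fwRatio_le (hT : 2 ≤ T) :
    ∑ k ∈ Finset.range T, (1 - fwRatio T k) ^ 2 ≤ 2 / Real.log T ^ 2 := by
  have hlog : 0 < Real.log T := Real.log_pos (by exact_mod_cast hT)
  have hH : Real.log T ≤ harmonicNum T := log_le_harmonicNum T
  calc ∑ k ∈ Finset.range T, (1 - fwRatio T k) ^ 2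
      ≤ ∑ k ∈ Finset.range T, (1 / ((k + 1) * harmonicNum T)) ^ 2 := by
        exact Finset.sum_le_sum fun k _ =>
          pow_le_pow_left₀ (sub_nonneg.2 fwRatio_le_one) one_sub_fwRatio_le 2
    _ = harmonicNum2 T / harmonicNum T ^ 2 := by
        rw [harmonicNum2, Finset.sum_div]
        refine Finset.sum_congr rfl fun k _ => ?_
        rw [one_div_pow, mul_pow, div_div]
    _ ≤ 2 / Real.log T ^ 2 := by
        gcongr
        exact harmonicNum2_le_two T

end Schedule

/-- There is an absolute constant `C > 0` such that for every run of the
Frank–Wolfe algorithm with `T ≥ 2` iterations,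
`max_{0 ≤ j ≤ T} F(x(t_j)) ≥ (1/4) F(x*) - C n L / (ln T)²`. -/
theorem fw_best_iterate_log_bound :
    ∃ C : ℝ, 0 < C ∧
      ∀ (n : ℕ) (F : (Fin n → ℝ) → ℝ) (gradF : (Fin n → ℝ) → Fin n → ℝ) (L : ℝ),
        0 ≤ L →
        (∀ z ∈ Set.Icc (0 : Fin n → ℝ) 1, 0 ≤ F z) →
        DRSubmodular F →
        HasGradientOnBox F gradF →
        (∀ z ∈ Set.Icc (0 : Fin n → ℝ) 1, ∀ w ∈ Set.Icc (0 : Fin n → ℝ) 1,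
          |F w - F z - ∑ i, gradF z i * (w i - z i)| ≤ L / 2 * ∑ i, (w i - z i) ^ 2) →
        F 0 = 0 →
        ∀ P : Set (Fin n → ℝ), P ⊆ Set.Icc 0 1 → Convex ℝ P → (0 : Fin n → ℝ) ∈ P →
        ∀ xstar ∈ P, (∀ z ∈ P, F z ≤ F xstar) →
        ∀ T : ℕ, 2 ≤ T →
        ∀ x v : ℕ → Fin n → ℝ,
          x 0 = 0 →
          (∀ j < T, v j ∈ P) →
          (∀ j < T, ∀ w ∈ P, ∑ i, gradF (x j) i * w i ≤ ∑ i, gradF (x j) i * v j i) →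
          (∀ j < T, x (j + 1) = fwRatio T j • x j + (1 - fwRatio T j) • v j) →
          ∃ j ≤ T, F (x j) ≥ 1 / 4 * F xstar - C * (n : ℝ) * L / Real.log T ^ 2 := by
  refine ⟨1, one_pos, ?_⟩
  intro n F gradF L hL hF hDR hgrad hsm hF0 P hPbox _ _ xstar hxstar _ T hT x v hx0 hvP hlmo
    hrec
  obtain ⟨-, -, hval⟩ := hDR.frankWolfe_invariant hL hsm hgrad hF hF0 (hPbox hxstar)
    (fun j hj => ⟨half_le_fwRatio hj, fwRatio_le_one⟩) hx0 (fun j hj => hPbox (hvP j hj))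
    (fun j hj => hlmo j hj xstar hxstar) hrec T le_rfl
  rw [prod_range_fwRatio (by omega)] at hval
  have herr := mul_le_mul_of_nonneg_left (sum_range_sq_one_sub_fwRatio_le hT)
    (by positivity : 0 ≤ L / 2 * n)
  refine ⟨T, le_rfl, ?_⟩
  calc 1 / 4 * F xstar - 1 * n * L / Real.log T ^ 2
      = (1 / 2 - (1 / 2) ^ 2) * F xstar - L / 2 * n * (2 / Real.log T ^ 2) := by ring
    _ ≤ F (x T) := by linarith
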